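/- Fix q > 1 and β > 0, and suppose Z := ∫_ℝ exp_q(−β u²) du is finite and positive. Define f(e) := exp_q(−β e²)/Z. Then for every n ≥ 1 and all x₁, ..., xₙ ∈ ℝ, the q-log-likelihood g(θ) := Σ_{i=1}^n ln_q f(xᵢ − θ) attains its unique maximum over θ ∈ ℝ at θ* = (x₁ + ⋯ + xₙ)/n; that is, g(θ) < g(θ*) for all θ ≠ θ*. -/

import Mathlib

open MeasureTheory

/-- The `q`-exponential: `exp_q x = (1 + (1-q)x)^(1/(1-q))` if `1 + (1-q)x > 0`, else `0`. -/
noncomputable def qexp (q x : ℝ) : ℝ :=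
  if 0 < 1 + (1 - q) * x then (1 + (1 - q) * x) ^ (1 / (1 - q)) else 0

/-- The `q`-logarithm: `ln_q x = (x^(1-q) - 1)/(1-q)`. -/
noncomputable def qlog (q x : ℝ) : ℝ := (x ^ (1 - q) - 1) / (1 - q)

/-!
Since `(exp_q y / Z)^(1-q) = (1 + (1-q) y) Z^(q-1)`, the `q`-logarithm of the `q`-Gaussian density
is an affine function of `-e²` with positive slope `β Z^(q-1)`. The `q`-log-likelihood is thus a
constant minus a positive multiple of `∑ (xᵢ - θ)²`, and the least-squares sum is uniquely
minimized at the mean.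
-/

theorem one_add_mul_neg_mul_sq_pos {q β : ℝ} (hq : 1 ≤ q) (hβ : 0 ≤ β) (e : ℝ) :
    0 < 1 + (1 - q) * (-β * e ^ 2) := by
  nlinarith [mul_nonneg (sub_nonneg.2 hq) (mul_nonneg hβ (sq_nonneg e))]

theorem qlog_qexp_div {q y Z : ℝ} (hq : q ≠ 1) (hZ : 0 < Z) (hy : 0 < 1 + (1 - q) * y) :
    qlog q (qexp q y / Z) = qlog q Z⁻¹ + Z ^ (q - 1) * y := by
  have hq' : 1 - q ≠ 0 := sub_ne_zero.2 hq.symm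
  have hpow : (qexp q y / Z) ^ (1 - q) = (1 + (1 - q) * y) * Z ^ (q - 1) := by
    rw [qexp, if_pos hy, Real.div_rpow (Real.rpow_nonneg hy.le _) hZ.le, ← Real.rpow_mul hy.le,
      one_div_mul_cancel hq', Real.rpow_one, div_eq_mul_inv, ← Real.rpow_neg hZ.le, neg_sub]
  have hinv : Z⁻¹ ^ (1 - q) = Z ^ (q - 1) := by
    rw [Real.inv_rpow hZ.le, ← Real.rpow_neg hZ.le, neg_sub]
  rw [qlog, qlog, hpow, hinv]
  field_simp
  ring

section LeastSquares

variable {ι : Type*} [Fintype ι] (x : ι → ℝ)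

theorem sum_sub_mean_eq_zero : ∑ i, (x i - (∑ j, x j) / Fintype.card ι) = 0 := by
  rcases isEmpty_or_nonempty ι with hι | hι
  · simp
  · rw [Finset.sum_sub_distrib, Finset.sum_const, Finset.card_univ, nsmul_eq_mul,
      mul_div_cancel₀ _ (by positivity), sub_self]

theorem sum_sq_sub_eq_sum_sq_sub_mean_add (θ : ℝ) :
    ∑ i, (x i - θ) ^ 2 = ∑ i, (x i - (∑ j, x j) / Fintype.card ι) ^ 2
      + Fintype.card ι * ((∑ j, x j) / Fintype.card ι - θ) ^ 2 := by
  set m := (∑ j, x j) / Fintype.card ι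
  calc ∑ i, (x i - θ) ^ 2
      = ∑ i, ((x i - m) ^ 2 + 2 * (m - θ) * (x i - m) + (m - θ) ^ 2) :=
        Finset.sum_congr rfl fun i _ => by ring
    _ = ∑ i, (x i - m) ^ 2 + 2 * (m - θ) * ∑ i, (x i - m) + Fintype.card ι * (m - θ) ^ 2 := by
        rw [Finset.sum_add_distrib, Finset.sum_add_distrib, ← Finset.mul_sum, Finset.sum_const,
          Finset.card_univ, nsmul_eq_mul]
    _ = ∑ i, (x i - m) ^ 2 + Fintype.card ι * (m - θ) ^ 2 := by
        rw [sum_sub_mean_eq_zero, mul_zero, add_zero]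

theorem sum_sq_sub_mean_lt [Nonempty ι] {θ : ℝ} (hθ : θ ≠ (∑ j, x j) / Fintype.card ι) :
    ∑ i, (x i - (∑ j, x j) / Fintype.card ι) ^ 2 < ∑ i, (x i - θ) ^ 2 := by
  rw [sum_sq_sub_eq_sum_sq_sub_mean_add x θ, lt_add_iff_pos_right]
  have : (∑ j, x j) / Fintype.card ι - θ ≠ 0 := sub_ne_zero.2 hθ.symm
  positivity

end LeastSquares

theorem tsallis_mle_mean_general (q β : ℝ) (hq : 1 < q) (hβ : 0 < β)
    (hZpos : 0 < ∫ u : ℝ, qexp q (-β * u ^ 2))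
    (n : ℕ) (hn : 1 ≤ n) (x : Fin n → ℝ) (f : ℝ → ℝ)
    (hf : ∀ e : ℝ, f e = qexp q (-β * e ^ 2) / ∫ u : ℝ, qexp q (-β * u ^ 2)) :
    ∀ θ : ℝ, θ ≠ (∑ i, x i) / n →
      (∑ i, qlog q (f (x i - θ))) < ∑ i, qlog q (f (x i - (∑ i, x i) / n)) := by
  intro θ hθ
  set Z := ∫ u : ℝ, qexp q (-β * u ^ 2)
  have hlog (e : ℝ) : qlog q (f e) = qlog q Z⁻¹ - β * Z ^ (q - 1) * e ^ 2 := by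
    rw [hf, qlog_qexp_div hq.ne' hZpos (one_add_mul_neg_mul_sq_pos hq.le hβ.le e)]
    ring
  have : Nonempty (Fin n) := ⟨⟨0, hn⟩⟩
  have hls := sum_sq_sub_mean_lt x (θ := θ) (by rwa [Fintype.card_fin])
  rw [Fintype.card_fin] at hls
  simp only [hlog, Finset.sum_sub_distrib, ← Finset.mul_sum]
  gcongr

/-- Converse direction of the law of error in Tsallis statistics: for the `q`-Gaussian
density `f e = exp_q (-β e²) / Z` with `q > 1`, `β > 0` and `Z := ∫ exp_q (-β u²) du`
finite and positive, the `q`-log-likelihood `g θ = ∑ i, ln_q (f (xᵢ - θ))` attains its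
unique maximum at the arithmetic mean `θ* = (x₁ + ⋯ + xₙ)/n`. -/
theorem tsallis_mle_mean (q β : ℝ) (hq : 1 < q) (hβ : 0 < β)
    (hint : Integrable (fun u : ℝ => qexp q (-β * u ^ 2)))
    (hZpos : 0 < ∫ u : ℝ, qexp q (-β * u ^ 2))
    (n : ℕ) (hn : 1 ≤ n) (x : Fin n → ℝ) (f : ℝ → ℝ)
    (hf : ∀ e : ℝ, f e = qexp q (-β * e ^ 2) / ∫ u : ℝ, qexp q (-β * u ^ 2)) :
    ∀ θ : ℝ, θ ≠ (∑ i, x i) / n →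
      (∑ i, qlog q (f (x i - θ))) < ∑ i, qlog q (f (x i - (∑ i, x i) / n)) :=
  tsallis_mle_mean_general q β hq hβ hZpos n hn x f hf
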